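/- Let L be a co-Heyting algebra and a a join-irreducible element of L (a ≠ ⊥ and a = x ⊔ y implies a = x or a = y). Then for every b ∈ L, b ≪ a if and only if b < a. -/

import Mathlib

/-- `Ll b a` means `b ≪ a`: `a \ b = a` and `b ≤ a`. -/
def Ll {L : Type*} [CoheytingAlgebra L] (b a : L) : Prop := a \ b = a ∧ b ≤ a

theorem Ll.lt {L : Type*} [CoheytingAlgebra L] {a b : L} (ha : a ≠ ⊥) (h : Ll b a) : b < a := by
  refine h.2.lt_of_ne ?_
  rintro rfl
  exact ha (h.1.symm.trans sdiff_self)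

theorem sdiff_eq_self_of_lt_of_supIrred {L : Type*} [GeneralizedCoheytingAlgebra L] {a b : L}
    (hirr : ∀ x y : L, a = x ⊔ y → a = x ∨ a = y) (hb : b < a) : a \ b = a :=
  ((hirr (a \ b) b (sdiff_sup_cancel hb.le).symm).resolve_right hb.ne').symm

theorem ll_iff_lt_of_supIrred {L : Type*} [CoheytingAlgebra L] (a : L)
    (ha : a ≠ ⊥) (hirr : ∀ x y : L, a = x ⊔ y → a = x ∨ a = y) (b : L) :
    Ll b a ↔ b < a :=
  ⟨Ll.lt ha, fun hb => ⟨sdiff_eq_self_of_lt_of_supIrred hirr hb, hb.le⟩⟩
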